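/- Let M ≥ 2 and let Y₁, …, Y_M be independent, identically distributed real random variables whose common law μ is atomless, has cumulative distribution function F, finite first moment, and is such that x ↦ x·F(x) is μ-integrable, and let y ∈ ℝ. Define h̃(a, b) := (1/2)·( a·1_{a > b} + b·1_{b > a} ) and the estimator Ŝ := (1/M)·Σ_{i=1}^M |Y_i − y| + (1/M)·Σ_{i=1}^M Y_i − (2/(M·(M−1)))·Σ_{i ≠ j} h̃(Y_i, Y_j). Then E[Ŝ] = CRPS(F, y); i.e., the U-statistic PWM estimator of the CRPS is unbiased. -/

import Mathlib

/-!
With `X, X'` independent of law `μ`, write `F t - 1{y ≤ t} = ∫ (1{s ≤ t} - 1{y ≤ t}) dμ(s)`;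
squaring, exchanging the integrals and polarizing `2uv = u² + v² - (u - v)²` for the step
functions gives the energy form `CRPS = E|X - y| - E|X - X'| / 2`. Off the diagonal, which is
`μ ⊗ μ`-null since `μ` is atomless, `|a - b| = 4 h̃(a, b) - a - b`, so
`CRPS = E|X - y| + E X - 2 E h̃(X, X')`. By independence every pair `(Yᵢ, Yⱼ)`, `i ≠ j`, has law
`μ ⊗ μ`, so each of the three sums of the estimator has the corresponding expectation.
-/

open MeasureTheory ProbabilityTheory Set

/-- The symmetrized kernel `h̃(a, b) = (1/2)·(a·1_{a > b} + b·1_{b > a})`. -/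
noncomputable def htilde (a b : ℝ) : ℝ :=
  (1 / 2) * (a * (if a > b then (1 : ℝ) else 0) + b * (if b > a then (1 : ℝ) else 0))

noncomputable def stepDiff (a b t : ℝ) : ℝ :=
  (if a ≤ t then 1 else 0) - if b ≤ t then 1 else 0

lemma stepDiff_sub_stepDiff (a b c t : ℝ) :
    stepDiff a c t - stepDiff b c t = stepDiff a b t := by
  unfold stepDiff; ring

lemma measurable_stepDiff_uncurry (b : ℝ) : Measurable fun q : ℝ × ℝ ↦ stepDiff q.1 b q.2 :=
  (Measurable.ite (measurableSet_le measurable_fst measurable_snd) measurable_const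
    measurable_const).sub
    (Measurable.ite (measurableSet_le measurable_const measurable_snd) measurable_const
    measurable_const)

lemma stepDiff_sq (a b t : ℝ) :
    stepDiff a b t ^ 2 = (Ico (min a b) (max a b)).indicator 1 t := by
  unfold stepDiff
  simp only [indicator_apply, mem_Ico, min_le_iff, lt_max_iff, Pi.one_apply]
  split_ifs <;> grind

lemma integrable_stepDiff_sq (a b : ℝ) : Integrable (fun t ↦ stepDiff a b t ^ 2) := by
  simp_rw [stepDiff_sq]
  exact (integrable_indicator_iff measurableSet_Ico).2 (integrableOn_const measure_Ico_lt_top.ne)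

lemma integral_stepDiff_sq (a b : ℝ) : ∫ t, stepDiff a b t ^ 2 = |a - b| := by
  simp_rw [stepDiff_sq]
  rw [integral_indicator_one measurableSet_Ico, Real.volume_real_Ico_of_le min_le_max,
    max_sub_min_eq_abs, abs_sub_comm]

lemma stepDiff_mul_stepDiff (a b c t : ℝ) :
    stepDiff a c t * stepDiff b c t
      = (stepDiff a c t ^ 2 + stepDiff b c t ^ 2 - stepDiff a b t ^ 2) / 2 := by
  rw [← stepDiff_sub_stepDiff a b c]; ring

lemma integrable_stepDiff_mul_stepDiff (a b c : ℝ) :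
    Integrable (fun t ↦ stepDiff a c t * stepDiff b c t) := by
  simp_rw [stepDiff_mul_stepDiff a b c]
  exact (((integrable_stepDiff_sq a c).add (integrable_stepDiff_sq b c)).sub
    (integrable_stepDiff_sq a b)).div_const 2

lemma integral_stepDiff_mul_stepDiff (a b c : ℝ) :
    ∫ t, stepDiff a c t * stepDiff b c t = (|a - c| + |b - c| - |a - b|) / 2 := by
  simp_rw [stepDiff_mul_stepDiff a b c]
  have hac := integrable_stepDiff_sq a c
  have hbc := integrable_stepDiff_sq b c
  rw [integral_div, integral_sub (f := fun t ↦ stepDiff a c t ^ 2 + stepDiff b c t ^ 2)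
    (hac.add hbc) (integrable_stepDiff_sq a b), integral_add hac hbc, integral_stepDiff_sq,
    integral_stepDiff_sq, integral_stepDiff_sq]

lemma integral_stepDiff (μ : Measure ℝ) [IsProbabilityMeasure μ] (y t : ℝ) :
    ∫ s, stepDiff s y t ∂μ = μ.real (Iic t) - if y ≤ t then 1 else 0 := by
  have h : (fun s : ℝ ↦ if s ≤ t then (1 : ℝ) else 0) = (Iic t).indicator 1 := by
    ext s; simp [indicator_apply]
  have hi : Integrable ((Iic t).indicator (1 : ℝ → ℝ)) μ :=
    (integrable_indicator_iff measurableSet_Iic).2 (integrableOn_const (measure_ne_top μ _))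
  simp only [stepDiff]
  rw [integral_sub (h ▸ hi) (integrable_const _), h, integral_indicator_one
    measurableSet_Iic, integral_const, probReal_univ, one_smul]

lemma abs_mul_le_half_add_sq (a b : ℝ) : |a * b| ≤ (a ^ 2 + b ^ 2) / 2 := by
  rw [abs_mul, ← sq_abs a, ← sq_abs b]
  nlinarith [sq_nonneg (|a| - |b|)]

lemma integrable_stepDiff_mul_stepDiff_prod {μ : Measure ℝ} [IsProbabilityMeasure μ]
    (hInt : Integrable id μ) (y : ℝ) :
    Integrable (fun q : (ℝ × ℝ) × ℝ ↦ stepDiff q.1.1 y q.2 * stepDiff q.1.2 y q.2)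
      ((μ.prod μ).prod volume) := by
  have hmeas : Measurable fun q : (ℝ × ℝ) × ℝ ↦ stepDiff q.1.1 y q.2 * stepDiff q.1.2 y q.2 :=
    ((measurable_stepDiff_uncurry y).comp (measurable_fst.fst.prodMk measurable_snd)).mul
      ((measurable_stepDiff_uncurry y).comp (measurable_fst.snd.prodMk measurable_snd))
  have hdist : Integrable (fun x ↦ |x - y|) μ := (hInt.sub (integrable_const y)).abs
  refine (integrable_prod_iff hmeas.aestronglyMeasurable).2
    ⟨.of_forall fun p ↦ integrable_stepDiff_mul_stepDiff p.1 p.2 y, ?_⟩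
  refine Integrable.mono' (((hdist.comp_fst μ).add (hdist.comp_snd μ)).div_const 2)
    hmeas.norm.stronglyMeasurable.integral_prod_right'.aestronglyMeasurable (.of_forall fun p ↦ ?_)
  dsimp only [Pi.add_apply]
  rw [Real.norm_of_nonneg (integral_nonneg fun _ ↦ norm_nonneg _), ← integral_stepDiff_sq,
    ← integral_stepDiff_sq, ← integral_add (integrable_stepDiff_sq _ _)
    (integrable_stepDiff_sq _ _), ← integral_div]
  exact integral_mono (integrable_stepDiff_mul_stepDiff p.1 p.2 y).norm
    (((integrable_stepDiff_sq _ _).add (integrable_stepDiff_sq _ _)).div_const 2)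
    fun t ↦ abs_mul_le_half_add_sq _ _

noncomputable def crps (μ : Measure ℝ) (y : ℝ) : ℝ :=
  ∫ t, (μ.real (Iic t) - if y ≤ t then 1 else 0) ^ 2

theorem crps_eq_integral_abs_sub_sub_half_energy {μ : Measure ℝ} [IsProbabilityMeasure μ]
    (hInt : Integrable id μ) (y : ℝ) :
    crps μ y = ∫ x, |x - y| ∂μ - (∫ p, |p.1 - p.2| ∂μ.prod μ) / 2 := by
  have hsq (t : ℝ) : (μ.real (Iic t) - if y ≤ t then 1 else 0) ^ 2
      = ∫ p, stepDiff p.1 y t * stepDiff p.2 y t ∂μ.prod μ := by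
    rw [← integral_stepDiff, sq]
    exact (integral_prod_mul (fun s ↦ stepDiff s y t) (fun s ↦ stepDiff s y t)).symm
  have hdist : Integrable (fun x ↦ |x - y|) μ := (hInt.sub (integrable_const y)).abs
  have henergy : Integrable (fun p : ℝ × ℝ ↦ |p.1 - p.2|) (μ.prod μ) :=
    ((hInt.comp_fst μ).sub (hInt.comp_snd μ)).abs
  calc crps μ y = ∫ t, ∫ p, stepDiff p.1 y t * stepDiff p.2 y t ∂μ.prod μ := by
        simp only [crps, hsq]
    _ = ∫ p : ℝ × ℝ, (∫ t, stepDiff p.1 y t * stepDiff p.2 y t) ∂μ.prod μ :=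
        (integral_integral_swap (integrable_stepDiff_mul_stepDiff_prod hInt y)).symm
    _ = ∫ p, (|p.1 - y| + |p.2 - y| - |p.1 - p.2|) / 2 ∂μ.prod μ := by
        simp only [integral_stepDiff_mul_stepDiff]
    _ = ∫ x, |x - y| ∂μ - (∫ p, |p.1 - p.2| ∂μ.prod μ) / 2 := by
        have hfst := hdist.comp_fst μ
        have hsnd := hdist.comp_snd μ
        rw [integral_div, integral_sub (f := fun p ↦ |p.1 - y| + |p.2 - y|) (hfst.add hsnd)
          henergy, integral_add hfst hsnd, integral_fun_fst (fun x ↦ |x - y|),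
          integral_fun_snd (fun x ↦ |x - y|)]
        simp only [probReal_univ, one_smul]
        ring

lemma ae_fst_ne_snd {α : Type*} [MeasurableSpace α] [MeasurableEq α]
    (μ ν : Measure α) [SFinite ν] [NullSingletonClass ν] : ∀ᵐ p ∂μ.prod ν, p.1 ≠ p.2 := by
  simp only [ae_iff, ne_eq, not_not]
  refine (Measure.measure_prod_null (μ := μ) (ν := ν) measurableSet_diagonal).2
    (.of_forall fun x ↦ ?_)
  have : Prod.mk x ⁻¹' diagonal α = {x} := by ext; simp [eq_comm]
  simp [this]

lemma htilde_eq_of_ne {a b : ℝ} (h : a ≠ b) : htilde a b = (|a - b| + a + b) / 4 := by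
  unfold htilde
  rcases h.lt_or_gt with h | h
  · rw [abs_of_neg (sub_neg.2 h), if_neg h.not_gt, if_pos h]; ring
  · rw [abs_of_pos (sub_pos.2 h), if_pos h, if_neg h.not_gt]; ring

lemma htilde_ae_eq (μ ν : Measure ℝ) [SFinite ν] [NullSingletonClass ν] :
    (fun p : ℝ × ℝ ↦ htilde p.1 p.2) =ᵐ[μ.prod ν] fun p ↦ (|p.1 - p.2| + p.1 + p.2) / 4 :=
  (ae_fst_ne_snd μ ν).mono fun _ ↦ htilde_eq_of_ne

section
variable {μ : Measure ℝ} [IsProbabilityMeasure μ] [NullSingletonClass μ]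

lemma integrable_htilde (hInt : Integrable id μ) :
    Integrable (fun p : ℝ × ℝ ↦ htilde p.1 p.2) (μ.prod μ) :=
  ((((hInt.comp_fst μ).sub (hInt.comp_snd μ)).abs.add (hInt.comp_fst μ)).add
    (hInt.comp_snd μ)).div_const 4 |>.congr (htilde_ae_eq μ μ).symm

theorem crps_eq_integral_htilde (hInt : Integrable id μ) (y : ℝ) :
    crps μ y = ∫ x, |x - y| ∂μ + ∫ x, x ∂μ - 2 * ∫ p, htilde p.1 p.2 ∂μ.prod μ := by
  have hfst : Integrable (fun p : ℝ × ℝ ↦ p.1) (μ.prod μ) := hInt.comp_fst μ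
  have hsnd : Integrable (fun p : ℝ × ℝ ↦ p.2) (μ.prod μ) := hInt.comp_snd μ
  have henergy : Integrable (fun p : ℝ × ℝ ↦ |p.1 - p.2|) (μ.prod μ) := (hfst.sub hsnd).abs
  rw [crps_eq_integral_abs_sub_sub_half_energy hInt, integral_congr_ae (htilde_ae_eq μ μ),
    integral_div, integral_add (f := fun p ↦ |p.1 - p.2| + p.1) (henergy.add hfst) hsnd,
    integral_add henergy hfst, integral_fun_fst (fun x : ℝ ↦ x), integral_fun_snd (fun x : ℝ ↦ x)]
  simp only [probReal_univ, one_smul]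
  ring

end

lemma integrable_comp_and_integral_comp_of_map_eq {Ω β : Type*} [MeasurableSpace Ω]
    [MeasurableSpace β] {P : Measure Ω} {ν : Measure β} {X : Ω → β} (hX : AEMeasurable X P)
    (hmap : P.map X = ν) {g : β → ℝ} (hg : Integrable g ν) :
    Integrable (fun ω ↦ g (X ω)) P ∧ ∫ ω, g (X ω) ∂P = ∫ x, g x ∂ν := by
  subst hmap
  exact ⟨hg.comp_aemeasurable hX, (integral_map hX hg.aestronglyMeasurable).symm⟩

lemma integral_uStatistic_estimator {Ω : Type*} [MeasurableSpace Ω] {P : Measure Ω} {M : ℕ}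
    (hM : 2 ≤ M) {A B : Fin M → Ω → ℝ} {C : Fin M → Fin M → Ω → ℝ} {a b c : ℝ}
    (hA : ∀ i, Integrable (A i) P ∧ ∫ ω, A i ω ∂P = a)
    (hB : ∀ i, Integrable (B i) P ∧ ∫ ω, B i ω ∂P = b)
    (hC : ∀ i j, i ≠ j → Integrable (C i j) P ∧ ∫ ω, C i j ω ∂P = c) :
    ∫ ω, ((1 / (M : ℝ)) * ∑ i, A i ω + (1 / (M : ℝ)) * ∑ i, B i ω
        - (2 / ((M : ℝ) * ((M : ℝ) - 1))) * ∑ p ∈ Finset.univ.offDiag, C p.1 p.2 ω) ∂P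
      = a + b - 2 * c := by
  have hC' : ∀ p ∈ (Finset.univ : Finset (Fin M)).offDiag, Integrable (C p.1 p.2) P ∧
      ∫ ω, C p.1 p.2 ω ∂P = c := fun p hp ↦ hC p.1 p.2 (Finset.mem_offDiag.1 hp).2.2
  have hsumA := integrable_finsetSum Finset.univ fun i _ ↦ (hA i).1
  have hsumB := integrable_finsetSum Finset.univ fun i _ ↦ (hB i).1
  have hsumC := integrable_finsetSum _ fun p hp ↦ (hC' p hp).1
  rw [integral_sub (f := fun ω ↦ (1 / (M : ℝ)) * ∑ i, A i ω + (1 / (M : ℝ)) * ∑ i, B i ω)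
      ((hsumA.const_mul _).add (hsumB.const_mul _)) (hsumC.const_mul _),
    integral_add (hsumA.const_mul _) (hsumB.const_mul _), integral_const_mul, integral_const_mul,
    integral_const_mul, integral_finsetSum _ fun i _ ↦ (hA i).1,
    integral_finsetSum _ fun i _ ↦ (hB i).1, integral_finsetSum _ fun p hp ↦ (hC' p hp).1,
    Finset.sum_congr rfl fun i _ ↦ (hA i).2, Finset.sum_congr rfl fun i _ ↦ (hB i).2,
    Finset.sum_congr rfl fun p hp ↦ (hC' p hp).2]
  simp only [Finset.sum_const, Finset.offDiag_card, Finset.card_univ, Fintype.card_fin,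
    nsmul_eq_mul]
  have hM' : (2 : ℝ) ≤ M := by exact_mod_cast hM
  have hM0 : (M : ℝ) ≠ 0 := by linarith
  have hM1 : (M : ℝ) - 1 ≠ 0 := by linarith
  push_cast [Nat.cast_sub (Nat.le_mul_self M)]
  field_simp

theorem u_statistic_crps_unbiased_general
    {Ω : Type*} [MeasurableSpace Ω] (P : Measure Ω) [IsProbabilityMeasure P]
    (M : ℕ) (hM : 2 ≤ M)
    (Y : Fin M → Ω → ℝ) (hYm : ∀ i, Measurable (Y i))
    (hIndep : ProbabilityTheory.iIndepFun Y P)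
    (μ : Measure ℝ) (hmap : ∀ i, P.map (Y i) = μ)
    (hAtomless : ∀ x : ℝ, μ {x} = 0)
    (F : ℝ → ℝ) (hF : ∀ t, F t = (μ (Set.Iic t)).toReal)
    (hInt : Integrable id μ)
    (y : ℝ) :
    (∫ ω, ((1 / (M : ℝ)) * ∑ i : Fin M, |Y i ω - y|
        + (1 / (M : ℝ)) * ∑ i : Fin M, Y i ω
        - (2 / ((M : ℝ) * ((M : ℝ) - 1)))
            * ∑ p ∈ Finset.univ.offDiag, htilde (Y p.1 ω) (Y p.2 ω)) ∂P) =
      ∫ t : ℝ, (F t - if y ≤ t then (1 : ℝ) else 0) ^ 2 := by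
  have : IsProbabilityMeasure μ :=
    hmap ⟨0, by omega⟩ ▸ Measure.isProbabilityMeasure_map (hYm _).aemeasurable
  have : NullSingletonClass μ := ⟨hAtomless⟩
  have hpair (i j : Fin M) (hij : i ≠ j) : P.map (fun ω ↦ (Y i ω, Y j ω)) = μ.prod μ := by
    rw [(indepFun_iff_map_prod_eq_prod_map_map (hYm i).aemeasurable (hYm j).aemeasurable).1
      (hIndep.indepFun hij), hmap, hmap]
  calc _ = ∫ x, |x - y| ∂μ + ∫ x, x ∂μ - 2 * ∫ p, htilde p.1 p.2 ∂μ.prod μ :=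
        integral_uStatistic_estimator hM
          (fun i ↦ integrable_comp_and_integral_comp_of_map_eq (hYm i).aemeasurable (hmap i)
            (hInt.sub (integrable_const y)).abs)
          (fun i ↦ integrable_comp_and_integral_comp_of_map_eq (hYm i).aemeasurable (hmap i) hInt)
          (fun i j hij ↦ integrable_comp_and_integral_comp_of_map_eq
            ((hYm i).prodMk (hYm j)).aemeasurable (hpair i j hij) (integrable_htilde hInt))
    _ = crps μ y := (crps_eq_integral_htilde hInt y).symm
    _ = _ := by simp only [crps, hF]; rfl

/-- The U-statistic PWM estimator of the CRPS is unbiased: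
`E[(1/M)·Σᵢ |Yᵢ − y| + (1/M)·Σᵢ Yᵢ − (2/(M(M−1)))·Σ_{i ≠ j} h̃(Yᵢ, Yⱼ)] = CRPS(F, y)`. -/
theorem u_statistic_crps_unbiased
    {Ω : Type*} [MeasurableSpace Ω] (P : Measure Ω) [IsProbabilityMeasure P]
    (M : ℕ) (hM : 2 ≤ M)
    (Y : Fin M → Ω → ℝ) (hYm : ∀ i, Measurable (Y i))
    (hIndep : ProbabilityTheory.iIndepFun Y P)
    (μ : Measure ℝ) (hmap : ∀ i, P.map (Y i) = μ)
    (hAtomless : ∀ x : ℝ, μ {x} = 0)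
    (F : ℝ → ℝ) (hF : ∀ t, F t = (μ (Set.Iic t)).toReal)
    (hInt : Integrable id μ)
    (hInt2 : Integrable (fun x => x * F x) μ)
    (y : ℝ) :
    (∫ ω, ((1 / (M : ℝ)) * ∑ i : Fin M, |Y i ω - y|
        + (1 / (M : ℝ)) * ∑ i : Fin M, Y i ω
        - (2 / ((M : ℝ) * ((M : ℝ) - 1)))
            * ∑ p ∈ Finset.univ.offDiag, htilde (Y p.1 ω) (Y p.2 ω)) ∂P) =
      ∫ t : ℝ, (F t - if y ≤ t then (1 : ℝ) else 0) ^ 2 :=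
  u_statistic_crps_unbiased_general P M hM Y hYm hIndep μ hmap hAtomless F hF hInt y
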